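/- arXiv:2008.01130 — 2 statements merged into one kernel-verified Lean document; each statement's English description precedes it below -/
import Mathlib

section
/- Let $X \sim \mathrm{Gamma}(a, 1)$ and $Y_n \sim \mathrm{Gamma}(n, 1)$ be independent with $a > 0$ and $n \ge 1$ an integer. Then for all $x > 0$, $P\big(X/(X+Y_n) \ge 12 n^{-1}(a + x)\big) \le 2 e^{-x}$. -/
/-!
If `Y > n / 2`, then `X / (X + Y) ≥ 12 (a + x) / n` forces `X ≥ 6 (a + x)`, so the event lies in
`{X ≥ 6 (a + x)} ∪ {Y ≤ n / 2}` (when `12 (a + x) > n` it is null, as `X / (X + Y) ≤ 1`).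
Both tails are bounded by Chernoff's method with the Gamma moment generating function
`E[e^{tX}] = (r / (r - t))^θ`, using `t = 1/2` for the upper tail of `X` and `t = -1` for the lower
tail of `Y`; each bound is at most `e^{-x}`.
-/

open MeasureTheory ProbabilityTheory Real Set

lemma measure_le_exp_mul_lintegral_exp (μ : Measure ℝ) {s : Set ℝ} {t u : ℝ}
    (hs : ∀ y ∈ s, t * u ≤ t * y) :
    μ s ≤ ENNReal.ofReal (exp (-(t * u))) * ∫⁻ y, ENNReal.ofReal (exp (t * y)) ∂μ := by
  have hmarkov := mul_meas_ge_le_lintegral₀ (μ := μ)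
    (measurable_exp.comp (measurable_const_mul t)).ennreal_ofReal.aemeasurable
    (ENNReal.ofReal (exp (t * u)))
  have hsub : s ⊆ {y | ENNReal.ofReal (exp (t * u)) ≤ ENNReal.ofReal (exp (t * y))} :=
    fun y hy => ENNReal.ofReal_le_ofReal (exp_le_exp.2 (hs y hy))
  calc μ s = ENNReal.ofReal (exp (-(t * u))) * (ENNReal.ofReal (exp (t * u)) * μ s) := by
        rw [← mul_assoc, ← ENNReal.ofReal_mul (exp_nonneg _), ← exp_add, neg_add_cancel, exp_zero,
          ENNReal.ofReal_one, one_mul]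
    _ ≤ _ := by gcongr; exact (mul_le_mul_right (measure_mono hsub) _).trans hmarkov

section Gamma

variable {θ r : ℝ}

lemma gammaMeasure_Iio_zero : gammaMeasure θ r (Iio 0) = 0 := by
  rw [gammaMeasure, withDensity_apply _ measurableSet_Iio, lintegral_gammaPDF_of_nonpos le_rfl]

lemma lintegral_exp_mul_gammaMeasure (hθ : 0 < θ) (hr : 0 < r) {t : ℝ} (ht : t < r) :
    ∫⁻ y, ENNReal.ofReal (exp (t * y)) ∂gammaMeasure θ r = ENNReal.ofReal ((r / (r - t)) ^ θ) := by
  have hrt : 0 < r - t := sub_pos.2 ht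
  have hpdf : ∀ y, gammaPDF θ r y * ENNReal.ofReal (exp (t * y))
      = ENNReal.ofReal ((r / (r - t)) ^ θ) * gammaPDF θ (r - t) y := by
    intro y
    rcases lt_or_ge y 0 with hy | hy
    · simp only [gammaPDF_of_neg hy, zero_mul, mul_zero]
    · rw [gammaPDF_of_nonneg hy, gammaPDF_of_nonneg hy, ← ENNReal.ofReal_mul (by positivity),
        ← ENNReal.ofReal_mul (by positivity)]
      congr 1
      have hscale : (r / (r - t)) ^ θ * (r - t) ^ θ = r ^ θ := by
        rw [div_rpow hr.le hrt.le, div_mul_cancel₀ _ (rpow_pos_of_pos hrt θ).ne']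
      rw [← hscale, mul_assoc _ (exp _), ← exp_add]
      ring_nf
  have hpdf_meas (s : ℝ) : Measurable (gammaPDF θ s) := (measurable_gammaPDFReal θ s).ennreal_ofReal
  rw [gammaMeasure, lintegral_withDensity_eq_lintegral_mul _ (hpdf_meas r) (by fun_prop)]
  simp only [Pi.mul_apply, hpdf]
  rw [lintegral_const_mul _ (hpdf_meas (r - t)), lintegral_gammaPDF_eq_one hθ hrt, mul_one]

lemma gammaMeasure_Ici_le (hθ : 0 < θ) (hr : 0 < r) (u : ℝ) :
    gammaMeasure θ r (Ici u) ≤ ENNReal.ofReal (2 ^ θ * exp (-(r * u / 2))) := by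
  refine (measure_le_exp_mul_lintegral_exp _ (t := r / 2) (u := u) fun y (hy : u ≤ y) => by
    gcongr).trans_eq ?_
  rw [lintegral_exp_mul_gammaMeasure hθ hr (by linarith), ← ENNReal.ofReal_mul (exp_nonneg _),
    mul_comm, show r / (r - r / 2) = 2 by field_simp; ring]
  ring_nf

lemma gammaMeasure_Iic_le (hθ : 0 < θ) (hr : 0 < r) (m : ℝ) :
    gammaMeasure θ r (Iic m) ≤ ENNReal.ofReal (2 ^ (-θ) * exp (r * m)) := by
  refine (measure_le_exp_mul_lintegral_exp _ (t := -r) (u := m) fun y (hy : y ≤ m) => by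
    nlinarith).trans_eq ?_
  rw [lintegral_exp_mul_gammaMeasure hθ hr (by linarith), ← ENNReal.ofReal_mul (exp_nonneg _),
    mul_comm, show r / (r - -r) = 2⁻¹ by field_simp; ring, inv_rpow zero_le_two, ← rpow_neg_one,
    ← rpow_mul zero_le_two]
  ring_nf

variable {Ω : Type*} [MeasurableSpace Ω] {P : Measure Ω} {X : Ω → ℝ}

lemma aemeasurable_of_map_eq_gammaMeasure (hθ : 0 < θ) (hr : 0 < r)
    (hX : P.map X = gammaMeasure θ r) : AEMeasurable X P :=
  have := isProbabilityMeasure_gammaMeasure hθ hr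
  .of_map_ne_zero (hX ▸ IsProbabilityMeasure.ne_zero _)

lemma measure_preimage_of_map_eq_gammaMeasure (hθ : 0 < θ) (hr : 0 < r)
    (hX : P.map X = gammaMeasure θ r) {s : Set ℝ} (hs : MeasurableSet s) :
    P (X ⁻¹' s) = gammaMeasure θ r s := by
  rw [← hX, Measure.map_apply_of_aemeasurable (aemeasurable_of_map_eq_gammaMeasure hθ hr hX) hs]

lemma ae_nonneg_of_map_eq_gammaMeasure (hθ : 0 < θ) (hr : 0 < r)
    (hX : P.map X = gammaMeasure θ r) : ∀ᵐ ω ∂P, 0 ≤ X ω := by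
  refine ae_of_ae_map (aemeasurable_of_map_eq_gammaMeasure hθ hr hX) ?_
  rw [hX, ae_iff]
  simp only [not_le]
  exact gammaMeasure_Iio_zero

end Gamma

section Ratio

variable {Ω : Type*} [MeasurableSpace Ω] {P : Measure Ω} {X Y : Ω → ℝ} {c : ℝ}

lemma measure_le_div_add_eq_zero (hX : ∀ᵐ ω ∂P, 0 ≤ X ω) (hY : ∀ᵐ ω ∂P, 0 ≤ Y ω) (hc : 1 < c) :
    P {ω | c ≤ X ω / (X ω + Y ω)} = 0 := by
  refine measure_eq_zero_iff_ae_notMem.2 ?_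
  filter_upwards [hX, hY] with ω hXω hYω hω
  exact (hc.trans_le hω).not_ge (div_le_one_of_le₀ (by linarith) (by linarith))

lemma measure_le_div_add_le (hX : ∀ᵐ ω ∂P, 0 ≤ X ω) (hc : 0 ≤ c) {m : ℝ} (hm : 0 ≤ m) :
    P {ω | c ≤ X ω / (X ω + Y ω)} ≤ P {ω | c * m ≤ X ω} + P {ω | Y ω ≤ m} := by
  refine (measure_mono_ae ?_).trans (measure_union_le _ _)
  filter_upwards [hX] with ω hXω hω
  refine or_iff_not_imp_right.2 fun hYω => show c * m ≤ X ω from ?_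
  have hmY : m < Y ω := not_le.1 hYω
  calc c * m ≤ c * (X ω + Y ω) := by gcongr; linarith
    _ ≤ X ω := (le_div_iff₀ (by linarith)).1 hω

end Ratio

theorem beta_tail_bound_general
    {Ω : Type*} [MeasurableSpace Ω] (P : Measure Ω)
    (X Y : Ω → ℝ) (a : ℝ) (ha : 0 < a) (n : ℕ) (hn : 1 ≤ n)
    (hX : Measure.map X P = gammaMeasure a 1)
    (hY : Measure.map Y P = gammaMeasure n 1)
    (x : ℝ) (hx : 0 < x) :
    P {ω | 12 / (n : ℝ) * (a + x) ≤ X ω / (X ω + Y ω)}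
      ≤ ENNReal.ofReal (2 * Real.exp (-x)) := by
  have hn0 : (0 : ℝ) < n := by exact_mod_cast hn
  have hX0 := ae_nonneg_of_map_eq_gammaMeasure ha one_pos hX
  rcases lt_or_ge (n : ℝ) (12 * (a + x)) with hlarge | hsmall
  · have hc : 1 < 12 / (n : ℝ) * (a + x) := by rwa [div_mul_eq_mul_div, one_lt_div hn0]
    simp [measure_le_div_add_eq_zero hX0 (ae_nonneg_of_map_eq_gammaMeasure hn0 one_pos hY) hc]
  have hXtail : P {ω | 6 * (a + x) ≤ X ω} ≤ ENNReal.ofReal (exp (-x)) := by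
    refine (measure_preimage_of_map_eq_gammaMeasure ha one_pos hX measurableSet_Ici).trans_le
      ((gammaMeasure_Ici_le ha one_pos _).trans (ENNReal.ofReal_le_ofReal ?_))
    rw [rpow_def_of_pos two_pos, ← exp_add, exp_le_exp]
    nlinarith [log_two_lt_d9]
  have hYtail : P {ω | Y ω ≤ n / 2} ≤ ENNReal.ofReal (exp (-x)) := by
    refine (measure_preimage_of_map_eq_gammaMeasure hn0 one_pos hY measurableSet_Iic).trans_le
      ((gammaMeasure_Iic_le hn0 one_pos _).trans (ENNReal.ofReal_le_ofReal ?_))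
    rw [rpow_def_of_pos two_pos, ← exp_add, exp_le_exp]
    nlinarith [log_two_gt_d9]
  have hthreshold : 12 / (n : ℝ) * (a + x) * (n / 2) = 6 * (a + x) := by field_simp; ring
  calc P {ω | 12 / (n : ℝ) * (a + x) ≤ X ω / (X ω + Y ω)}
      ≤ P {ω | 6 * (a + x) ≤ X ω} + P {ω | Y ω ≤ n / 2} := by
        rw [← hthreshold]
        exact measure_le_div_add_le hX0 (by positivity) (by positivity)
    _ ≤ ENNReal.ofReal (exp (-x)) + ENNReal.ofReal (exp (-x)) := add_le_add hXtail hYtail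
    _ = ENNReal.ofReal (2 * exp (-x)) := by
        rw [← ENNReal.ofReal_add (exp_nonneg _) (exp_nonneg _), two_mul]

/-- If `X ~ Gamma(a,1)` and `Yₙ ~ Gamma(n,1)` are independent, `a > 0`, `n ≥ 1`, then for all
`x > 0`, `P(X/(X+Yₙ) ≥ 12 n⁻¹ (a + x)) ≤ 2 e^{-x}` (a tail bound for the Beta(a,n) law). -/
theorem beta_tail_bound
    {Ω : Type*} [MeasurableSpace Ω] (P : Measure Ω) [IsProbabilityMeasure P]
    (X Y : Ω → ℝ) (a : ℝ) (ha : 0 < a) (n : ℕ) (hn : 1 ≤ n)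
    (hX : Measure.map X P = gammaMeasure a 1)
    (hY : Measure.map Y P = gammaMeasure n 1)
    (hXY : IndepFun X Y P)
    (x : ℝ) (hx : 0 < x) :
    P {ω | 12 / (n : ℝ) * (a + x) ≤ X ω / (X ω + Y ω)}
      ≤ ENNReal.ofReal (2 * Real.exp (-x)) :=
  beta_tail_bound_general P X Y a ha n hn hX hY x hx
end

section
/- For any $t < 1$ and $a > 0$, as $n \to \infty$, $n^{a}\int_0^1 e^{ntv} v^{a-1}(1-v)^{n-1}\,dv \to (1-t)^{-a}\Gamma(a)$. -/
open MeasureTheory Filter Real Set Topology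

/-!
Substituting `u = n v` turns the expression into `∫₀ⁿ e^{tu} u^{a-1} (1 - u/n)^{n-1} du`.
The integrand tends to `u^{a-1} e^{-(1-t)u}` and, because `(1 - u/n)^{n-1} ≤ e^{1-u}` on `(0, n)`,
it is dominated by `e · u^{a-1} e^{-(1-t)u}`, which is integrable on `(0, ∞)` as `t < 1` and
`a > 0`.
Dominated convergence then gives the limit `∫₀^∞ u^{a-1} e^{-(1-t)u} du = (1-t)^{-a} Γ(a)`.
-/

theorem one_sub_div_rpow_sub_one_le_exp {u x : ℝ} (hux : u ≤ x) (hx : 1 ≤ x) :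
    (1 - u / x) ^ (x - 1) ≤ exp (1 - u) := by
  have hx0 : 0 < x := one_pos.trans_le hx
  have hux' : u / x ≤ 1 := (div_le_one hx0).mpr hux
  calc (1 - u / x) ^ (x - 1) ≤ exp (-(u / x)) ^ (x - 1) := by
        gcongr
        linarith [add_one_le_exp (-(u / x))]
    _ = exp (-u + u / x) := by
        rw [← exp_mul]
        congr 1
        field_simp
        ring
    _ ≤ exp (1 - u) := by gcongr; linarith

theorem tendsto_one_sub_div_rpow_sub_one_exp (u : ℝ) :
    Tendsto (fun n : ℕ => (1 - u / n) ^ ((n : ℝ) - 1)) atTop (𝓝 (exp (-u))) := by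
  have hbase : Tendsto (fun n : ℕ => 1 - u / n) atTop (𝓝 1) := by
    simpa using tendsto_const_nhds.sub (tendsto_const_div_atTop_nhds_zero_nat u)
  have hquot := (tendsto_one_add_div_pow_exp (-u)).div hbase one_ne_zero
  rw [div_one] at hquot
  refine hquot.congr' ?_
  filter_upwards [hbase.eventually (lt_mem_nhds one_pos)] with n hn
  rw [Pi.div_apply, rpow_sub hn, rpow_one, rpow_natCast, neg_div, ← sub_eq_add_neg]

theorem rpow_mul_setIntegral_Ioo_exp_mul_rpow_mul_one_sub_rpow {a b c t : ℝ} (hc : 0 < c) :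
    c ^ a * ∫ v in Ioo 0 1, exp (c * t * v) * v ^ (a - 1) * (1 - v) ^ b
      = ∫ u in Ioo 0 c, exp (t * u) * u ^ (a - 1) * (1 - u / c) ^ b := by
  have hsub := intervalIntegral.integral_comp_div
    (fun v => exp (c * t * v) * v ^ (a - 1) * (1 - v) ^ b) (a := 0) (b := c) hc.ne'
  rw [zero_div, div_self hc.ne', smul_eq_mul] at hsub
  have hscale : ∫ u in Ioo 0 c, exp (t * u) * u ^ (a - 1) * (1 - u / c) ^ b
      = c ^ (a - 1) *
          ∫ u in Ioo 0 c, exp (c * t * (u / c)) * (u / c) ^ (a - 1) * (1 - u / c) ^ b := by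
    rw [← integral_const_mul]
    refine setIntegral_congr_fun measurableSet_Ioo fun u hu => ?_
    have : c ^ (a - 1) ≠ 0 := (rpow_pos_of_pos hc _).ne'
    rw [div_rpow hu.1.le hc.le]
    field_simp
  rw [intervalIntegral.integral_of_le hc.le, intervalIntegral.integral_of_le zero_le_one,
    integral_Ioc_eq_integral_Ioo, integral_Ioc_eq_integral_Ioo] at hsub
  rw [hscale, hsub, ← mul_assoc, ← rpow_add_one hc.ne', sub_add_cancel]

theorem tendsto_setIntegral_Ioo_exp_mul_rpow_mul_one_sub_div_rpow {a t : ℝ} (ha : 0 < a)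
    (ht : t < 1) :
    Tendsto (fun n : ℕ => ∫ u in Ioo 0 (n : ℝ),
        exp (t * u) * u ^ (a - 1) * (1 - u / n) ^ ((n : ℝ) - 1))
      atTop (𝓝 (∫ u in Ioi 0, u ^ (a - 1) * exp (-((1 - t) * u)))) := by
  set F : ℕ → ℝ → ℝ := fun n => (Ioo 0 (n : ℝ)).indicator
    fun u => exp (t * u) * u ^ (a - 1) * (1 - u / n) ^ ((n : ℝ) - 1)
  have hF (n : ℕ) : ∫ u in Ioi 0, F n u = ∫ u in Ioo 0 (n : ℝ),
      exp (t * u) * u ^ (a - 1) * (1 - u / n) ^ ((n : ℝ) - 1) := by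
    rw [integral_indicator measurableSet_Ioo,
      Measure.restrict_restrict_of_subset Ioo_subset_Ioi_self]
  have hexp (u : ℝ) :
      exp (t * u) * u ^ (a - 1) * exp (-u) = u ^ (a - 1) * exp (-((1 - t) * u)) := by
    rw [mul_right_comm, ← exp_add]; ring_nf
  refine (tendsto_integral_of_dominated_convergence
    (fun u => exp 1 * (u ^ (a - 1) * exp (-((1 - t) * u))))
    (fun n => ?_) ?_ (fun n => ?_) ?_).congr hF
  · exact (Measurable.indicator (by fun_prop) measurableSet_Ioo).aestronglyMeasurable
  · have hint := integrableOn_rpow_mul_exp_neg_mul_rpow (s := a - 1) (p := 1)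
      (by linarith) one_pos (sub_pos.mpr ht)
    simp only [rpow_one, neg_mul] at hint
    exact hint.const_mul (exp 1)
  · filter_upwards [ae_restrict_mem measurableSet_Ioi] with u (hu : 0 < u)
    by_cases hun : u ∈ Ioo 0 (n : ℝ)
    · have hn : (1 : ℝ) ≤ n := Nat.one_le_cast.mpr (Nat.cast_pos.mp (hu.trans hun.2))
      have hbase : 0 ≤ 1 - u / n := sub_nonneg.mpr ((div_le_one (by linarith)).mpr hun.2.le)
      simp only [F, indicator_of_mem hun]
      rw [norm_of_nonneg (by positivity), ← hexp]
      calc _ ≤ exp (t * u) * u ^ (a - 1) * exp (1 - u) := by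
            gcongr
            exact one_sub_div_rpow_sub_one_le_exp hun.2.le hn
        _ = _ := by rw [sub_eq_add_neg 1 u, exp_add]; ring
    · simp only [F, indicator_of_notMem hun, norm_zero]
      positivity
  · filter_upwards [ae_restrict_mem measurableSet_Ioi] with u (hu : 0 < u)
    have hlim := (tendsto_one_sub_div_rpow_sub_one_exp u).const_mul (exp (t * u) * u ^ (a - 1))
    rw [hexp] at hlim
    refine hlim.congr' ?_
    filter_upwards [tendsto_natCast_atTop_atTop.eventually_gt_atTop u] with n hn
    simp only [F, indicator_of_mem (show u ∈ Ioo 0 (n : ℝ) from ⟨hu, hn⟩)]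

/-- For any `t < 1` and `a > 0`, `n^a ∫₀¹ e^{ntv} v^{a-1}(1-v)^{n-1} dv → (1-t)^{-a} Γ(a)`. -/
theorem gamma_integral_limit (a t : ℝ) (ha : 0 < a) (ht : t < 1) :
    Tendsto (fun n : ℕ =>
        (n : ℝ) ^ a *
          ∫ v in Set.Ioo (0:ℝ) 1, Real.exp (n * t * v) * v ^ (a - 1) * (1 - v) ^ ((n:ℝ) - 1))
      atTop (nhds ((1 - t) ^ (-a) * Real.Gamma a)) := by
  have ht' : 0 < 1 - t := sub_pos.mpr ht
  have hlim := tendsto_setIntegral_Ioo_exp_mul_rpow_mul_one_sub_div_rpow ha ht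
  rw [integral_rpow_mul_exp_neg_mul_Ioi ha ht', one_div, inv_rpow ht'.le,
    ← rpow_neg ht'.le] at hlim
  refine hlim.congr' ?_
  filter_upwards [eventually_gt_atTop 0] with n hn
  exact (rpow_mul_setIntegral_Ioo_exp_mul_rpow_mul_one_sub_rpow (Nat.cast_pos.mpr hn)).symm
end
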